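/- arXiv:1912.06770 — 5 statements merged into one kernel-verified Lean document; each statement's English description precedes it below -/
import Mathlib

section
/- For an irrational real number L > 0, the map x ↦ (⌊x + kL⌋)_{k ≥ 1} is injective on the interval [0, L). That is, if 0 ≤ x < y < L, then there exists a positive integer k such that ⌊x + kL⌋ ≠ ⌊y + kL⌋. -/
/-!
By Dirichlet's approximation theorem some `d ≥ 1` has `dL` within `y - x` of an integer `m`,
and `s = m - dL` is nonzero since `L` is irrational. Translates of the multiples `t s`, `t ≥ 1`,
by integers leave no gap of length `y - x`, so some `n - tdL = j + t s` lies in `(x, y)`; the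
integer `n` then separates `x + tdL` from `y + tdL`.
-/

open Set

section Archimedean

variable {K : Type*} [Field K] [LinearOrder K] [IsStrictOrderedRing K] [FloorRing K]

theorem exists_pos_nat_int_add_mul_mem_Ioo_of_pos {s x y : K} (hs : 0 < s) (hsxy : s < y - x) :
    ∃ t : ℕ, 0 < t ∧ ∃ j : ℤ, (j : K) + t * s ∈ Ioo x y := by
  -- the first multiple of `s` beyond `c = fract x` overshoots it by at most `s`
  set c := Int.fract x
  have hc : 0 ≤ c / s := div_nonneg (Int.fract_nonneg x) hs.le
  have hlt : c < (⌊c / s⌋₊ + 1 : ℕ) * s := by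
    rw [← div_lt_iff₀ hs]
    exact_mod_cast Nat.lt_floor_add_one (c / s)
  have hle : ((⌊c / s⌋₊ + 1 : ℕ) : K) * s ≤ c + s := by
    push_cast
    rw [add_mul, one_mul, add_le_add_iff_right, ← le_div_iff₀ hs]
    exact Nat.floor_le hc
  refine ⟨⌊c / s⌋₊ + 1, Nat.succ_pos _, ⌊x⌋, ?_⟩
  constructor <;> linarith [Int.floor_add_fract x]

theorem exists_pos_nat_int_add_mul_mem_Ioo {s x y : K} (hs : s ≠ 0) (hsxy : |s| < y - x) :
    ∃ t : ℕ, 0 < t ∧ ∃ j : ℤ, (j : K) + t * s ∈ Ioo x y := by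
  rcases hs.lt_or_gt with hneg | hpos
  · obtain ⟨t, ht, j, hj⟩ := exists_pos_nat_int_add_mul_mem_Ioo_of_pos (x := -y) (y := -x)
      (neg_pos.2 hneg) (by rw [abs_of_neg hneg] at hsxy; linarith)
    refine ⟨t, ht, -j, ?_⟩
    constructor <;> push_cast <;> linarith [hj.1, hj.2]
  · exact exists_pos_nat_int_add_mul_mem_Ioo_of_pos hpos (by rwa [abs_of_pos hpos] at hsxy)

end Archimedean

theorem Int.floor_ne_floor_of_lt_of_le {K : Type*} [Ring K] [LinearOrder K] [FloorRing K]
    {a b : K} {n : ℤ} (ha : a < n) (hb : n ≤ b) : ⌊a⌋ ≠ ⌊b⌋ :=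
  ((Int.floor_lt.2 ha).trans_le (Int.le_floor.2 hb)).ne

theorem Irrational.exists_pos_nat_abs_intCast_sub_mul_lt {L : ℝ} (hL : Irrational L) {ε : ℝ}
    (hε : 0 < ε) : ∃ d : ℕ, 0 < d ∧ ∃ m : ℤ, (m : ℝ) - d * L ≠ 0 ∧ |(m : ℝ) - d * L| < ε := by
  obtain ⟨N, hN⟩ := exists_nat_one_div_lt hε
  obtain ⟨d, hd, -, hdL⟩ := Real.exists_nat_abs_mul_sub_round_le L N.succ_pos
  refine ⟨d, hd, round ((d : ℝ) * L), ((hL.natCast_mul hd.ne').intCast_sub _).ne_zero, ?_⟩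
  rw [abs_sub_comm]
  push_cast at hdL
  exact hdL.trans_lt (lt_of_le_of_lt (by gcongr; linarith) hN)

theorem Irrational.exists_pos_nat_int_sub_mul_mem_Ioo {L x y : ℝ} (hL : Irrational L)
    (hxy : x < y) : ∃ k : ℕ, 0 < k ∧ ∃ n : ℤ, (n : ℝ) - k * L ∈ Ioo x y := by
  obtain ⟨d, hd, m, hs, hsxy⟩ := hL.exists_pos_nat_abs_intCast_sub_mul_lt (sub_pos.2 hxy)
  obtain ⟨t, ht, j, hj⟩ := exists_pos_nat_int_add_mul_mem_Ioo hs hsxy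
  refine ⟨t * d, Nat.mul_pos ht hd, j + t * m, ?_⟩
  convert hj using 1
  push_cast
  ring

theorem stmt_0_general (L : ℝ) (hL : Irrational L)
    (x y : ℝ) (hxy : x < y) :
    ∃ k : ℕ, 0 < k ∧ ⌊x + (k : ℝ) * L⌋ ≠ ⌊y + (k : ℝ) * L⌋ := by
  obtain ⟨k, hk, n, hxn, hny⟩ := hL.exists_pos_nat_int_sub_mul_mem_Ioo hxy
  exact ⟨k, hk, Int.floor_ne_floor_of_lt_of_le (by linarith) (by linarith)⟩

/-- For an irrational real `L > 0`, the map `x ↦ (⌊x + kL⌋)_{k ≥ 1}` is injective on `[0, L)`: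
if `0 ≤ x < y < L` then some positive integer `k` has `⌊x + kL⌋ ≠ ⌊y + kL⌋`. -/
theorem stmt_0 (L : ℝ) (hL : Irrational L) (hLpos : 0 < L)
    (x y : ℝ) (hx : 0 ≤ x) (hxy : x < y) (hy : y < L) :
    ∃ k : ℕ, 0 < k ∧ ⌊x + (k : ℝ) * L⌋ ≠ ⌊y + (k : ℝ) * L⌋ :=
  stmt_0_general L hL x y hxy
end

section
/- Let L = ℓ/m > 0 be rational in lowest terms. Then for u, v ∈ [0, L), the sequences (⌊u + kL⌋)_{k ≥ 0} and (⌊v + kL⌋)_{k ≥ 0} are equal if and only if ⌊m·u⌋ = ⌊m·v⌋. -/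
lemma myFloorDiv (x : ℝ) (m : ℕ) (hm : 0 < m) : ⌊x / (m : ℝ)⌋ = ⌊x⌋ / (m : ℤ) := by
  have hm' : (0:ℝ) < m := by exact_mod_cast hm
  have hmz : (0:ℤ) < m := by exact_mod_cast hm
  have hne : (m:ℤ) ≠ 0 := hmz.ne'
  have e := Int.mul_ediv_add_emod ⌊x⌋ (m:ℤ)
  have r1 : 0 ≤ ⌊x⌋ % (m:ℤ) := Int.emod_nonneg _ hne
  have r2 : ⌊x⌋ % (m:ℤ) < m := Int.emod_lt_of_pos _ hmz
  have fl : (⌊x⌋:ℝ) ≤ x := Int.floor_le x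
  have fu : x < ⌊x⌋ + 1 := Int.lt_floor_add_one x
  have e' : (m:ℝ) * ((⌊x⌋/(m:ℤ) : ℤ):ℝ) + ((⌊x⌋ % (m:ℤ) : ℤ):ℝ) = (⌊x⌋:ℝ) := by
    exact_mod_cast congrArg (Int.cast : ℤ → ℝ) e
  have r1' : (0:ℝ) ≤ ((⌊x⌋ % (m:ℤ) : ℤ):ℝ) := by exact_mod_cast r1
  have r2' : ((⌊x⌋ % (m:ℤ) : ℤ):ℝ) + 1 ≤ m := by
    have : ⌊x⌋ % (m:ℤ) + 1 ≤ m := r2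
    exact_mod_cast this
  rw [Int.floor_eq_iff]
  constructor
  · rw [le_div_iff₀ hm']; nlinarith
  · rw [div_lt_iff₀ hm']; push_cast; nlinarith
lemma lemB (l m : ℕ) (hl : 0 < l) (hm : 0 < m) (hco : Nat.Coprime l m)
    (j j' : ℤ) (hj : 0 ≤ j) (hj2 : j < l) (hj' : 0 ≤ j') (hj'2 : j' < l)
    (h : ∀ k : ℕ, (j + k*l)/(m:ℤ) = (j' + k*l)/(m:ℤ)) : j = j' := by
  have hmz : (0:ℤ) < m := by exact_mod_cast hm
  have hmne : (m:ℤ) ≠ 0 := hmz.ne'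
  have aux : ∀ x y : ℤ, 0 ≤ x → x < y →
      (∀ k : ℕ, (x + k*l)/(m:ℤ) = (y + k*l)/(m:ℤ)) → False := by
    intro x y hx hxy hxyk
    obtain ⟨a, b, hab⟩ : IsCoprime (l:ℤ) (m:ℤ) := by
      rw [Int.isCoprime_iff_gcd_eq_one]
      simpa [Int.gcd] using hco
    set s : ℤ := ((m:ℤ)-1-x)*a with hs
    set k := (s % (m:ℤ)).toNat with hkdef
    have hkz : (k:ℤ) = s % (m:ℤ) := Int.toNat_of_nonneg (Int.emod_nonneg _ hmne)
    have hdvd : (m:ℤ) ∣ (x + (k:ℤ)*(l:ℤ)) - ((m:ℤ)-1) :=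
      ⟨-(((m:ℤ)-1-x)*b) - (s/(m:ℤ))*(l:ℤ), by
        rw [hkz, Int.emod_def, hs]; linear_combination ((m:ℤ)-1-x) * hab⟩
    have hmod : (x + (k:ℤ)*(l:ℤ)) % (m:ℤ) = (m:ℤ)-1 := by
      have h1 : ((m:ℤ)-1) % m = (m:ℤ)-1 := Int.emod_eq_of_lt (by omega) (by omega)
      have h2 : Int.ModEq (m:ℤ) ((m:ℤ)-1) (x + (k:ℤ)*(l:ℤ)) :=
        Int.modEq_iff_dvd.mpr hdvd
      have h3 : (x + (k:ℤ)*(l:ℤ)) % m = ((m:ℤ)-1) % m := h2.symm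
      rw [h1] at h3; exact h3
    have hq := Int.mul_ediv_add_emod (x + (k:ℤ)*(l:ℤ)) m
    rw [hmod] at hq
    have hge : (x + (k:ℤ)*(l:ℤ))/(m:ℤ) + 1 ≤ (y + (k:ℤ)*(l:ℤ)) / m := by
      rw [Int.le_ediv_iff_mul_le hmz]
      nlinarith
    have heq := hxyk k
    omega
  rcases lt_trichotomy j j' with hlt | he | hlt
  · exact (aux j j' hj hlt h).elim
  · exact he
  · exact (aux j' j hj' hlt (fun k => (h k).symm)).elim

/-- For rational `L = ℓ/m > 0` in lowest terms and `u, v ∈ [0, L)`, the sequences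
`(⌊u + kL⌋)_{k ≥ 0}` and `(⌊v + kL⌋)_{k ≥ 0}` coincide iff `⌊m·u⌋ = ⌊m·v⌋`. -/
theorem stmt_2 (l m : ℕ) (hl : 0 < l) (hm : 0 < m) (hco : Nat.Coprime l m)
    (L : ℝ) (hL : L = (l : ℝ) / (m : ℝ)) (u v : ℝ)
    (hu : u ∈ Set.Ico (0 : ℝ) L) (hv : v ∈ Set.Ico (0 : ℝ) L) :
    (∀ k : ℕ, ⌊u + (k : ℝ) * L⌋ = ⌊v + (k : ℝ) * L⌋) ↔ ⌊(m : ℝ) * u⌋ = ⌊(m : ℝ) * v⌋ := by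
  have hm' : (0:ℝ) < m := by exact_mod_cast hm
  have key : ∀ w : ℝ, ∀ k : ℕ, ⌊w + (k : ℝ) * L⌋ = (⌊(m:ℝ) * w⌋ + (k:ℤ) * l) / (m:ℤ) := by
    intro w k
    have h1 : w + (k : ℝ) * L = ((m:ℝ) * w + (k:ℝ) * l) / m := by
      rw [hL]; field_simp
    rw [h1, myFloorDiv _ m hm]
    congr 1
    have : ((k:ℝ) * l) = (((k:ℤ) * (l:ℤ) : ℤ) : ℝ) := by push_cast; ring
    rw [this, Int.floor_add_intCast]
  constructor
  · intro h
    have hb : ∀ w : ℝ, w ∈ Set.Ico (0:ℝ) L → 0 ≤ ⌊(m:ℝ)*w⌋ ∧ ⌊(m:ℝ)*w⌋ < l := by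
      intro w hw
      constructor
      · exact Int.floor_nonneg.mpr (by nlinarith [hw.1])
      · have : (m:ℝ) * w < l := by
          have := hw.2; rw [hL] at this
          calc (m:ℝ)*w < m * ((l:ℝ)/m) := by nlinarith
            _ = l := by field_simp
        exact_mod_cast Int.floor_lt.mpr (by exact_mod_cast this)
    obtain ⟨h1, h2⟩ := hb u hu
    obtain ⟨h3, h4⟩ := hb v hv
    exact lemB l m hl hm hco _ _ h1 h2 h3 h4 (fun k => by
      rw [← key u k, ← key v k, h k])
  · intro h k
    rw [key u k, key v k, h]
end

section
/- Let S be a countable dense subset of the circle ℝ/Lℤ (L > 0) and p ∈ (0,1). Form the random graph G on vertex set S by independently including each pair {u,v} with d(u,v) < 1 as an edge with probability p. Then almost surely G is geometrically existentially closed: for every s ∈ S, every pair of disjoint finite sets A, B ⊂ S contained in the open unit ball around s, and every ε > 0, there exists v ∈ S \ (A ∪ B) adjacent to all vertices of A, adjacent to no vertex of B, and with d(v, s) < ε. -/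
/-!
Fix `s`, `A`, `B` and `ε`. Since `S` is dense and the circle has no isolated points, the open set
of points within `ε` of `s` and within distance `1` of every vertex of `A ∪ B` contains infinitely
many vertices `v₀, v₁, …` outside `A ∪ B`. The edges from distinct `vₖ` to `A ∪ B` are distinct,
so the events "`vₖ` is joined to all of `A` and to none of `B`" are independent, each of
probability `p ^ #A * (1 - p) ^ #B > 0`, and by the second Borel–Cantelli lemma one of them occurs
almost surely. Countably many choices of `(s, A, B, ε = 1 / (n + 1))` suffice.
-/

open MeasureTheory ProbabilityTheory

/-- Geometric existential closure for an adjacency relation on a subset `S` of the circle. -/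
def IsGEC {L : ℝ} {S : Set (AddCircle L)} (Adj : S → S → Prop) : Prop :=
  ∀ (s : S) (A B : Finset S), Disjoint A B →
    (∀ a ∈ A, dist (a : AddCircle L) (s : AddCircle L) < 1) →
    (∀ b ∈ B, dist (b : AddCircle L) (s : AddCircle L) < 1) →
    ∀ ε : ℝ, 0 < ε →
      ∃ v : S, v ∉ A ∧ v ∉ B ∧ (∀ a ∈ A, Adj v a) ∧ (∀ b ∈ B, ¬ Adj v b) ∧
        dist (v : AddCircle L) (s : AddCircle L) < ε

open Filter Topology

theorem Dense.infinite_inter_of_isOpen {X : Type*} [TopologicalSpace X] [T1Space X]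
    [∀ x : X, NeBot (𝓝[≠] x)] {S U : Set X} (hS : Dense S) (hU : IsOpen U) (hne : U.Nonempty) :
    (S ∩ U).Infinite := fun hfin => by
  obtain ⟨x, hxU, hxS, hx⟩ := (hS.sdiff_finite hfin).inter_open_nonempty U hU hne
  exact hx ⟨hxS, hxU⟩

theorem Dense.exists_injective_nat_mem_of_isOpen {X : Type*} [TopologicalSpace X] [T1Space X]
    [∀ x : X, NeBot (𝓝[≠] x)] {S U : Set X} (hS : Dense S) (hU : IsOpen U) (hne : U.Nonempty)
    (F : Finset S) : ∃ v : ℕ → S, Function.Injective v ∧ ∀ k, (v k : X) ∈ U ∧ v k ∉ F := by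
  have hinf : ((Subtype.val ⁻¹' U : Set S) \ F).Infinite := by
    refine Set.Infinite.sdiff (Set.Infinite.of_image Subtype.val ?_) F.finite_toSet
    rw [Subtype.image_preimage_coe]
    exact hS.infinite_inter_of_isOpen hU hne
  let e := hinf.natEmbedding
  exact ⟨fun k => e k, Subtype.val_injective.comp e.injective, fun k => (e k).2⟩

theorem AddCircle.nontrivial_of_ne_zero {L : ℝ} (hL : L ≠ 0) : Nontrivial (AddCircle L) :=
  ⟨⟨((L / 2 : ℝ) : AddCircle L), 0, fun h => by
    have := AddCircle.norm_half_period_eq L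
    rw [h, norm_zero] at this
    exact hL (abs_eq_zero.1 (by linarith))⟩⟩

namespace ProbabilityTheory

variable {Ω ι κ β : Type*} [MeasurableSpace Ω] {μ : Measure Ω} [MeasurableSpace β]

theorem iIndepFun.measure_biInter_iInter_preimage [Fintype κ] {X : ι × κ → Ω → β}
    (hX : iIndepFun X μ) {t : κ → Set β} (ht : ∀ j, MeasurableSet (t j)) (s : Finset ι) :
    μ (⋂ i ∈ s, ⋂ j, X (i, j) ⁻¹' t j) = ∏ i ∈ s, ∏ j, μ (X (i, j) ⁻¹' t j) := by
  rw [← Finset.prod_product', ← hX.measure_inter_preimage_eq_mul (s ×ˢ Finset.univ)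
    (sets := fun p => t p.2) fun p _ => ht p.2]
  congr 1
  ext ω
  simp only [Set.mem_iInter, Set.mem_preimage, Finset.mem_product, Finset.mem_univ, and_true,
    Prod.forall]
  exact ⟨fun h i j hi => h i hi j, fun h i hi j => h i j hi⟩

theorem iIndepFun.iIndepSet_iInter_preimage [Fintype κ] {X : ι × κ → Ω → β}
    (hX : iIndepFun X μ) (hXm : ∀ p, Measurable (X p)) {t : κ → Set β}
    (ht : ∀ j, MeasurableSet (t j)) :
    iIndepSet (fun i => ⋂ j, X (i, j) ⁻¹' t j) μ := by
  rw [iIndepSet_iff_meas_biInter fun i => .iInter fun j => hXm _ (ht j)]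
  intro s
  rw [hX.measure_biInter_iInter_preimage ht]
  refine Finset.prod_congr rfl fun i _ => ?_
  simpa using (hX.measure_biInter_iInter_preimage ht {i}).symm

theorem iIndepSet.ae_exists_mem {G : ℕ → Set Ω} (hGm : ∀ k, MeasurableSet (G k))
    (hG : iIndepSet G μ) (hsum : ∑' k, μ (G k) = ⊤) : ∀ᵐ ω ∂μ, ∃ k, ω ∈ G k := by
  have := hG.isProbabilityMeasure
  have hlimsup : ∀ᵐ ω ∂μ, ω ∈ limsup G atTop := by
    rw [ae_iff, ← Set.compl_def, prob_compl_eq_zero_iff (.measurableSet_limsup hGm)]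
    exact measure_limsup_eq_one hGm hG hsum
  filter_upwards [hlimsup] with ω hω
  exact (Filter.mem_limsup_iff_frequently_mem.1 hω).exists

theorem iIndepFun.ae_exists_forall_eq [Fintype κ] [MeasurableSingletonClass β]
    {X : ℕ × κ → Ω → β} (hX : iIndepFun X μ) (hXm : ∀ p, Measurable (X p)) {c : κ → β}
    {m : κ → ENNReal} (hm : ∀ j, m j ≠ 0) (hXc : ∀ k j, μ (X (k, j) ⁻¹' {c j}) = m j) :
    ∀ᵐ ω ∂μ, ∃ k, ∀ j, X (k, j) ω = c j := by
  have hmeas (k : ℕ) : MeasurableSet (⋂ j, X (k, j) ⁻¹' {c j}) :=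
    .iInter fun j => hXm _ (measurableSet_singleton _)
  have hrow (k : ℕ) : μ (⋂ j, X (k, j) ⁻¹' {c j}) = ∏ j, m j := by
    simpa [hXc] using
      hX.measure_biInter_iInter_preimage (fun j => measurableSet_singleton (c j)) {k}
  have hsum : ∑' k, μ (⋂ j, X (k, j) ⁻¹' {c j}) = ⊤ := by
    simp only [hrow]
    exact ENNReal.tsum_const_eq_top_of_ne_zero (Finset.prod_ne_zero_iff.2 fun j _ => hm j)
  have hindep := hX.iIndepSet_iInter_preimage hXm fun j => measurableSet_singleton (c j)
  filter_upwards [hindep.ae_exists_mem hmeas hsum] with ω ⟨k, hk⟩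
  exact ⟨k, by simpa using hk⟩

theorem measure_preimage_singleton_bool [IsProbabilityMeasure μ] {f : Ω → Bool}
    (hf : Measurable f) {q : ENNReal} (hq : μ (f ⁻¹' {true}) = q) (b : Bool) :
    μ (f ⁻¹' {b}) = if b then q else 1 - q := by
  cases b
  · rw [if_neg Bool.false_ne_true, ← hq, ← prob_compl_eq_one_sub (hf (measurableSet_singleton _))]
    congr 1
    ext ω
    simp
  · exact hq

end ProbabilityTheory

section RandomGeometricGraph

variable {X Ω : Type*} [MetricSpace X] {S : Set X}

def randomGeometricAdj (E : Sym2 S → Ω → Bool) (ω : Ω) (u v : S) : Prop :=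
  u ≠ v ∧ dist (u : X) v < 1 ∧ E s(u, v) ω = true

theorem ae_exists_randomGeometricAdj_extension [∀ x : X, NeBot (𝓝[≠] x)] [MeasurableSpace Ω]
    {μ : Measure Ω} [IsProbabilityMeasure μ] (hS : Dense S) {p : ℝ} (hp : p ∈ Set.Ioo (0 : ℝ) 1)
    {E : Sym2 S → Ω → Bool} (hmeas : ∀ e, Measurable (E e)) (hindep : iIndepFun E μ)
    (hber : ∀ u v : S, u ≠ v → dist (u : X) v < 1 → μ {ω | E s(u, v) ω = true} = ENNReal.ofReal p)
    {s : S} {A B : Finset S} (hAB : Disjoint A B) (hA : ∀ a ∈ A, dist (a : X) s < 1)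
    (hB : ∀ b ∈ B, dist (b : X) s < 1) {ε : ℝ} (hε : 0 < ε) :
    ∀ᵐ ω ∂μ, ∃ v : S, v ∉ A ∧ v ∉ B ∧ (∀ a ∈ A, randomGeometricAdj E ω v a) ∧
      (∀ b ∈ B, ¬ randomGeometricAdj E ω v b) ∧ dist (v : X) s < ε := by
  classical
  set F := A ∪ B
  let U : Set X := Metric.ball (s : X) ε ∩ ⋂ a ∈ F, Metric.ball (a : X) 1
  have hU : IsOpen U :=
    Metric.isOpen_ball.inter (isOpen_biInter_finset fun a _ => Metric.isOpen_ball)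
  have hsU : (s : X) ∈ U := by
    refine ⟨Metric.mem_ball_self hε, Set.mem_iInter₂.2 fun a ha => ?_⟩
    rw [Metric.mem_ball, dist_comm]
    rcases Finset.mem_union.1 ha with ha | ha
    exacts [hA a ha, hB a ha]
  obtain ⟨v, hv_inj, hv⟩ := hS.exists_injective_nat_mem_of_isOpen hU ⟨s, hsU⟩ F
  have hv_ne (k : ℕ) (a : S) (ha : a ∈ F) : v k ≠ a := fun h => (hv k).2 (h ▸ ha)
  have hv_dist (k : ℕ) (a : S) (ha : a ∈ F) : dist (v k : X) a < 1 :=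
    Set.mem_iInter₂.1 (hv k).1.2 a ha
  let edge : ℕ × F → Sym2 S := fun q => s(v q.1, q.2)
  have hedge : Function.Injective edge := by
    rintro ⟨k, a⟩ ⟨l, b⟩ h
    rcases Sym2.eq_iff.1 h with ⟨hkl, hab⟩ | ⟨hkb, -⟩
    · exact Prod.ext (hv_inj hkl) (Subtype.ext hab)
    · exact absurd hkb (hv_ne k b b.2)
  have hp_ne_zero : ENNReal.ofReal p ≠ 0 := ENNReal.ofReal_ne_zero_iff.2 hp.1
  have hp_compl_ne_zero : 1 - ENNReal.ofReal p ≠ 0 :=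
    (tsub_pos_of_lt (ENNReal.ofReal_lt_one.2 hp.2)).ne'
  have hpattern := (hindep.precomp hedge).ae_exists_forall_eq (fun q => hmeas (edge q))
    (c := fun a => decide ((a : S) ∈ A))
    (fun a => by split_ifs <;> assumption)
    fun k a => measure_preimage_singleton_bool (hmeas _)
      (hber (v k) a (hv_ne k a a.2) (hv_dist k a a.2)) _
  filter_upwards [hpattern] with ω ⟨k, hk⟩
  have hE (a : S) (ha : a ∈ F) : E s(v k, a) ω = decide (a ∈ A) := hk ⟨a, ha⟩
  refine ⟨v k, fun h => (hv k).2 (Finset.mem_union_left B h),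
    fun h => (hv k).2 (Finset.mem_union_right A h), fun a ha => ?_, fun b hb => ?_,
    (hv k).1.1⟩
  · have haF := Finset.mem_union_left B ha
    exact ⟨hv_ne k a haF, hv_dist k a haF, by simpa [ha] using hE a haF⟩
  · rintro ⟨-, -, hvb⟩
    simpa [hvb, Finset.disjoint_right.1 hAB hb] using hE b (Finset.mem_union_right A hb)

end RandomGeometricGraph

/-- The random geometric graph on a countable dense subset `S` of `ℝ/Lℤ`, where each pair at
distance `< 1` is independently an edge with probability `p`, is almost surely g.e.c. -/
theorem stmt_5 (L : ℝ) (hLpos : 0 < L) (S : Set (AddCircle L))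
    (hScount : S.Countable) (hSdense : Dense S)
    (p : ℝ) (hp : p ∈ Set.Ioo (0 : ℝ) 1)
    {Ω : Type} [MeasurableSpace Ω] (μ : Measure Ω) [IsProbabilityMeasure μ]
    (E : Sym2 S → Ω → Bool) (hmeas : ∀ e, Measurable (E e))
    (hindep : iIndepFun E μ)
    (hber : ∀ u v : S, u ≠ v → dist (u : AddCircle L) (v : AddCircle L) < 1 →
      μ {ω | E s(u, v) ω = true} = ENNReal.ofReal p) :
    ∀ᵐ ω ∂μ, IsGEC (fun u v : S =>
      u ≠ v ∧ dist (u : AddCircle L) (v : AddCircle L) < 1 ∧ E s(u, v) ω = true) := by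
  have : Countable S := hScount.to_subtype
  -- With connectedness, this gives the circle no isolated points.
  have : Nontrivial (AddCircle L) := AddCircle.nontrivial_of_ne_zero hLpos.ne'
  have hext (s : S) (A B : Finset S) (n : ℕ) : ∀ᵐ ω ∂μ, Disjoint A B →
      (∀ a ∈ A, dist (a : AddCircle L) s < 1) → (∀ b ∈ B, dist (b : AddCircle L) s < 1) →
      ∃ v : S, v ∉ A ∧ v ∉ B ∧ (∀ a ∈ A, randomGeometricAdj E ω v a) ∧
        (∀ b ∈ B, ¬ randomGeometricAdj E ω v b) ∧ dist (v : AddCircle L) s < 1 / (n + 1) := by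
    simp only [eventually_imp_distrib_left]
    exact fun hAB hA hB => ae_exists_randomGeometricAdj_extension hSdense hp hmeas hindep hber
      hAB hA hB Nat.one_div_pos_of_nat
  filter_upwards [ae_all_iff.2 fun s => ae_all_iff.2 fun A => ae_all_iff.2 fun B =>
    ae_all_iff.2 (hext s A B)] with ω hω s A B hAB hA hB ε hε
  obtain ⟨n, hn⟩ := exists_nat_one_div_lt hε
  obtain ⟨v, hvA, hvB, hAdjA, hAdjB, hvs⟩ := hω s A B n hAB hA hB
  exact ⟨v, hvA, hvB, hAdjA, hAdjB, hvs.trans hn⟩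
end

section
/- Let L = ℓ/m be rational in lowest terms. Write each v ∈ [0, L) uniquely as v = q_v/m + r_v with q_v ∈ {0,…,ℓ−1} an integer and r_v ∈ [0, 1/m). If a bijection f between subsets of [0, L), fixing 0, satisfies q_{f(u)} = q_u for all u and preserves the strict order of the residues r (i.e., r_u < r_v ⟺ r_{f(u)} < r_{f(v)}), then for all u, v in its domain, ⌊m·d(u,v)⌋ = ⌊m·d(f(u), f(v))⌋, where d is the intrinsic metric on ℝ/Lℤ. -/
open Set

private lemma floor_min (a b : ℝ) : ⌊min a b⌋ = min ⌊a⌋ ⌊b⌋ :=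
  Monotone.map_min Int.floor_mono

private lemma circ_dist {L : ℝ} (hL : 0 < L) {u v : ℝ}
    (hu : u ∈ Set.Ico 0 L) (hv : v ∈ Set.Ico 0 L) :
    dist ((u : AddCircle L)) ((v : AddCircle L)) = min |u - v| (L - |u - v|) := by
  have h1 : dist ((u : AddCircle L)) ((v : AddCircle L)) = ‖((u - v : ℝ) : AddCircle L)‖ := by
    rw [dist_eq_norm]; norm_cast
  rw [h1, AddCircle.norm_eq]
  obtain ⟨hu0, huL⟩ := hu
  obtain ⟨hv0, hvL⟩ := hv
  have hxl : -L < u - v := by linarith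
  have hxu : u - v < L := by linarith
  have hinv : L⁻¹ * (u - v) = (u - v) / L := (div_eq_inv_mul _ _).symm
  rcases lt_or_ge (u - v) 0 with hx | hx
  · rcases le_or_gt 0 (2 * (u - v) + L) with h2 | h2
    · have hr : round (L⁻¹ * (u - v)) = 0 := by
        rw [round_eq, hinv, Int.floor_eq_iff]
        push_cast
        constructor
        · have : -(1/2 : ℝ) ≤ (u - v)/L := by rw [le_div_iff₀ hL]; linarith
          linarith
        · have : (u - v)/L < 1/2 := by rw [div_lt_iff₀ hL]; linarith
          linarith
      rw [hr]
      have habs : |u - v| = -(u - v) := abs_of_neg hx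
      rw [habs]
      push_cast
      rw [min_eq_left (by linarith)]
      rw [abs_of_neg (by linarith : u - v - 0 * L < 0)]
      ring
    · have hr : round (L⁻¹ * (u - v)) = -1 := by
        rw [round_eq, hinv, Int.floor_eq_iff]
        push_cast
        constructor
        · have : -(1 : ℝ) < (u - v)/L := by rw [lt_div_iff₀ hL]; linarith
          linarith
        · have : (u - v)/L < -(1/2 : ℝ) := by rw [div_lt_iff₀ hL]; linarith
          linarith
      rw [hr]
      have habs : |u - v| = -(u - v) := abs_of_neg hx
      rw [habs]
      push_cast
      rw [min_eq_right (by linarith)]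
      rw [abs_of_nonneg (by linarith : (0:ℝ) ≤ u - v - (-1) * L)]
      ring
  · rcases lt_or_ge (2 * (u - v)) L with h2 | h2
    · have hr : round (L⁻¹ * (u - v)) = 0 := by
        rw [round_eq, hinv, Int.floor_eq_iff]
        push_cast
        constructor
        · have : (0:ℝ) ≤ (u - v)/L := div_nonneg hx hL.le
          linarith
        · have : (u - v)/L < 1/2 := by rw [div_lt_iff₀ hL]; linarith
          linarith
      rw [hr]
      have habs : |u - v| = u - v := abs_of_nonneg hx
      rw [habs]
      push_cast
      rw [min_eq_left (by linarith)]
      rw [abs_of_nonneg (by linarith : (0:ℝ) ≤ u - v - 0 * L)]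
      ring
    · have hr : round (L⁻¹ * (u - v)) = 1 := by
        rw [round_eq, hinv, Int.floor_eq_iff]
        push_cast
        constructor
        · have : (1/2 : ℝ) ≤ (u - v)/L := by rw [le_div_iff₀ hL]; linarith
          linarith
        · have : (u - v)/L < 1 := by rw [div_lt_iff₀ hL]; linarith
          linarith
      rw [hr]
      have habs : |u - v| = u - v := abs_of_nonneg hx
      rw [habs]
      push_cast
      rw [min_eq_right (by linarith)]
      rw [abs_of_nonpos (by linarith : u - v - 1 * L ≤ 0)]
      ring

private def Fval (l qu qv : ℤ) : Ordering → ℤ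
  | .eq => min |qu - qv| (l - |qu - qv|)
  | .lt => if qu ≤ qv then min (qv - qu) (l - (qv - qu) - 1)
           else min (qu - qv - 1) (l - (qu - qv))
  | .gt => if qv ≤ qu then min (qu - qv) (l - (qu - qv) - 1)
           else min (qv - qu - 1) (l - (qv - qu))

private lemma key (l m : ℕ) (hl : 0 < l) (hm : 0 < m)
    (L : ℝ) (hLdef : L = (l : ℝ) / (m : ℝ))
    {u v : ℝ} (hu : u ∈ Set.Ico 0 L) (hv : v ∈ Set.Ico 0 L) :
    ⌊(m : ℝ) * dist ((u : AddCircle L)) ((v : AddCircle L))⌋ =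
      Fval l ⌊(m : ℝ) * u⌋ ⌊(m : ℝ) * v⌋
        (cmp (u - (⌊(m : ℝ) * u⌋ : ℝ) / m) (v - (⌊(m : ℝ) * v⌋ : ℝ) / m)) := by
  have hm' : (0 : ℝ) < m := by exact_mod_cast hm
  have hl' : (0 : ℝ) < l := by exact_mod_cast hl
  have hL : 0 < L := by rw [hLdef]; positivity
  have hmL : (m : ℝ) * L = l := by rw [hLdef]; field_simp
  rw [circ_dist hL hu hv]
  have hmin : (m : ℝ) * min |u - v| (L - |u - v|)
      = min ((m : ℝ) * |u - v|) ((l : ℝ) - (m : ℝ) * |u - v|) := by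
    rw [mul_min_of_nonneg _ _ hm'.le, mul_sub, hmL]
  rw [hmin, floor_min]
  set qu : ℤ := ⌊(m : ℝ) * u⌋ with hqu
  set qv : ℤ := ⌊(m : ℝ) * v⌋ with hqv
  set s : ℝ := (m : ℝ) * u - qu with hs
  set t : ℝ := (m : ℝ) * v - qv with ht
  have hs0 : 0 ≤ s := by have := Int.floor_le ((m : ℝ) * u); simp only [hs]; linarith
  have hs1 : s < 1 := by have := Int.lt_floor_add_one ((m : ℝ) * u); simp only [hs]; linarith
  have ht0 : 0 ≤ t := by have := Int.floor_le ((m : ℝ) * v); simp only [ht]; linarith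
  have ht1 : t < 1 := by have := Int.lt_floor_add_one ((m : ℝ) * v); simp only [ht]; linarith
  have hru : u - (qu : ℝ) / m = s / m := by rw [hs]; field_simp
  have hrv : v - (qv : ℝ) / m = t / m := by rw [ht]; field_simp
  have hmu : (m : ℝ) * u = qu + s := by rw [hs]; ring
  have hmv : (m : ℝ) * v = qv + t := by rw [ht]; ring
  rcases lt_trichotomy s t with hst | hst | hst
  · have hcmp : cmp (u - (qu : ℝ) / m) (v - (qv : ℝ) / m) = Ordering.lt := by
      rw [cmp_eq_lt_iff, hru, hrv]
      gcongr
    rw [hcmp]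
    rcases le_or_gt qu qv with hq | hq
    · have hqc : (qu : ℝ) ≤ qv := by exact_mod_cast hq
      have huv : u ≤ v := by nlinarith
      have habs : |u - v| = v - u := by rw [abs_of_nonpos (by linarith), neg_sub]
      have hdiff : (m : ℝ) * (v - u) = (qv : ℝ) - qu + (t - s) := by
        rw [mul_sub, hmu, hmv]; ring
      have f1 : ⌊(m : ℝ) * (v - u)⌋ = qv - qu := by
        rw [Int.floor_eq_iff, hdiff]; push_cast; constructor <;> linarith
      have f2 : ⌊(l : ℝ) - (m : ℝ) * (v - u)⌋ = l - (qv - qu) - 1 := by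
        rw [Int.floor_eq_iff, hdiff]; push_cast; constructor <;> linarith
      rw [habs, f1, f2]
      simp [Fval, hq]
    · have hqc : (qv : ℝ) + 1 ≤ qu := by exact_mod_cast hq
      have huv : v ≤ u := by nlinarith
      have habs : |u - v| = u - v := abs_of_nonneg (by linarith)
      have hdiff : (m : ℝ) * (u - v) = (qu : ℝ) - qv + (s - t) := by
        rw [mul_sub, hmu, hmv]; ring
      have f1 : ⌊(m : ℝ) * (u - v)⌋ = qu - qv - 1 := by
        rw [Int.floor_eq_iff, hdiff]; push_cast; constructor <;> linarith
      have f2 : ⌊(l : ℝ) - (m : ℝ) * (u - v)⌋ = l - (qu - qv) := by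
        rw [Int.floor_eq_iff, hdiff]; push_cast; constructor <;> linarith
      rw [habs, f1, f2]
      simp [Fval, not_le.mpr hq]
  · have hcmp : cmp (u - (qu : ℝ) / m) (v - (qv : ℝ) / m) = Ordering.eq := by
      rw [cmp_eq_eq_iff, hru, hrv, hst]
    rw [hcmp]
    have h : (m : ℝ) * (u - v) = ((qu - qv : ℤ) : ℝ) := by
      push_cast; rw [mul_sub, hmu, hmv, hst]; ring
    have habs : (m : ℝ) * |u - v| = |((qu - qv : ℤ) : ℝ)| := by
      rw [← h, abs_mul, abs_of_nonneg hm'.le]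
    have hcast : |((qu - qv : ℤ) : ℝ)| = ((|qu - qv| : ℤ) : ℝ) := Int.cast_abs.symm
    have hcast2 : (l : ℝ) - ((|qu - qv| : ℤ) : ℝ) = (((l : ℤ) - |qu - qv| : ℤ) : ℝ) := by
      push_cast; ring
    rw [habs, hcast, hcast2, Int.floor_intCast, Int.floor_intCast]
    simp [Fval]
  · have hcmp : cmp (u - (qu : ℝ) / m) (v - (qv : ℝ) / m) = Ordering.gt := by
      rw [cmp_eq_gt_iff, hru, hrv]
      gcongr
    rw [hcmp]
    rcases le_or_gt qv qu with hq | hq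
    · have hqc : (qv : ℝ) ≤ qu := by exact_mod_cast hq
      have huv : v ≤ u := by nlinarith
      have habs : |u - v| = u - v := abs_of_nonneg (by linarith)
      have hdiff : (m : ℝ) * (u - v) = (qu : ℝ) - qv + (s - t) := by
        rw [mul_sub, hmu, hmv]; ring
      have f1 : ⌊(m : ℝ) * (u - v)⌋ = qu - qv := by
        rw [Int.floor_eq_iff, hdiff]; push_cast; constructor <;> linarith
      have f2 : ⌊(l : ℝ) - (m : ℝ) * (u - v)⌋ = l - (qu - qv) - 1 := by
        rw [Int.floor_eq_iff, hdiff]; push_cast; constructor <;> linarith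
      rw [habs, f1, f2]
      simp [Fval, hq]
    · have hqc : (qu : ℝ) + 1 ≤ qv := by exact_mod_cast hq
      have huv : u ≤ v := by nlinarith
      have habs : |u - v| = v - u := by rw [abs_of_nonpos (by linarith), neg_sub]
      have hdiff : (m : ℝ) * (v - u) = (qv : ℝ) - qu + (t - s) := by
        rw [mul_sub, hmu, hmv]; ring
      have f1 : ⌊(m : ℝ) * (v - u)⌋ = qv - qu - 1 := by
        rw [Int.floor_eq_iff, hdiff]; push_cast; constructor <;> linarith
      have f2 : ⌊(l : ℝ) - (m : ℝ) * (v - u)⌋ = l - (qv - qu) := by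
        rw [Int.floor_eq_iff, hdiff]; push_cast; constructor <;> linarith
      rw [habs, f1, f2]
      simp [Fval, not_le.mpr hq]

private lemma cmp_congr {α : Type*} [LinearOrder α] {a b c d : α}
    (h1 : a < b ↔ c < d) (h2 : b < a ↔ d < c) : cmp a b = cmp c d := by
  rcases lt_trichotomy a b with h | h | h
  · rw [(cmp_eq_lt_iff _ _).mpr h, ((cmp_eq_lt_iff _ _).mpr (h1.mp h)).symm]
  · have hcd : c = d := le_antisymm (not_lt.mp (fun hh => absurd (h2.mpr hh) (by simp [h])))
      (not_lt.mp (fun hh => absurd (h1.mpr hh) (by simp [h])))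
    rw [h, hcd, cmp_self_eq_eq, cmp_self_eq_eq]
  · rw [(cmp_eq_gt_iff _ _).mpr h, ((cmp_eq_gt_iff _ _).mpr (h2.mp h)).symm]

/-- For `L = ℓ/m` in lowest terms, write `v ∈ [0,L)` as `v = q_v/m + r_v` with
`q_v = ⌊m·v⌋` and `r_v = v − q_v/m ∈ [0,1/m)`. If a bijection `f : A → B` between subsets of
`[0,L)` fixes `0`, preserves `q`, and preserves the strict order of the residues `r`, then it
preserves `⌊m·d(·,·)⌋` for the intrinsic metric `d` on `ℝ/Lℤ`. -/
theorem stmt_15 (l m : ℕ) (hl : 0 < l) (hm : 0 < m) (hco : Nat.Coprime l m)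
    (L : ℝ) (hLdef : L = (l : ℝ) / (m : ℝ))
    (A B : Set ℝ) (hA : A ⊆ Set.Ico 0 L) (hB : B ⊆ Set.Ico 0 L)
    (f : ℝ → ℝ) (hbij : Set.BijOn f A B)
    (h0A : (0 : ℝ) ∈ A) (hf0 : f 0 = 0)
    (hq : ∀ u ∈ A, ⌊(m : ℝ) * f u⌋ = ⌊(m : ℝ) * u⌋)
    (hr : ∀ u ∈ A, ∀ v ∈ A,
      (u - (⌊(m : ℝ) * u⌋ : ℝ) / m < v - (⌊(m : ℝ) * v⌋ : ℝ) / m ↔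
       f u - (⌊(m : ℝ) * f u⌋ : ℝ) / m < f v - (⌊(m : ℝ) * f v⌋ : ℝ) / m)) :
    ∀ u ∈ A, ∀ v ∈ A,
      ⌊(m : ℝ) * dist ((u : AddCircle L)) ((v : AddCircle L))⌋ =
      ⌊(m : ℝ) * dist ((f u : AddCircle L)) ((f v : AddCircle L))⌋ := by
  intro u hu v hv
  have hfu : f u ∈ B := hbij.mapsTo hu
  have hfv : f v ∈ B := hbij.mapsTo hv
  have h1 := hr u hu v hv
  have h2 := hr v hv u hu
  rw [hq u hu, hq v hv] at h1 h2
  rw [key l m hl hm L hLdef (hA hu) (hA hv),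
      key l m hl hm L hLdef (hB hfu) (hB hfv),
      hq u hu, hq v hv]
  congr 1
  exact cmp_congr h1 h2
end

section
/- Let G be a g.e.c. unit-threshold graph on a dense subset S of the real line ℝ (with metric |·|). Then any graph isomorphism f : S → S' to another such graph G' on dense S' ⊆ ℝ satisfies: for every x ∈ S and every integer k ≥ 2, the set {f(x−k), f(x+k)} equals {f(x)−k, f(x)+k} whenever x−k, x+k ∈ S. In particular, taking S = S' = ℚ, f maps each coset x + ℤ onto f(x) + ℤ with f(x+n) = f(x) + εn for a sign ε ∈ {±1} independent of x. -/
/-- Geometric existential closure for a graph on a subset `S` of the real line. -/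
def IsGECReal {S : Set ℝ} (G : SimpleGraph S) : Prop :=
  ∀ (s : S) (A B : Finset S), Disjoint A B →
    (∀ a ∈ A, |(a : ℝ) - (s : ℝ)| < 1) →
    (∀ b ∈ B, |(b : ℝ) - (s : ℝ)| < 1) →
    ∀ ε : ℝ, 0 < ε →
      ∃ v : S, v ∉ A ∧ v ∉ B ∧ (∀ a ∈ A, G.Adj v a) ∧ (∀ b ∈ B, ¬ G.Adj v b) ∧
        |(v : ℝ) - (s : ℝ)| < ε

/-- Adjacent vertices are at distance less than 1. -/
def HasUnitThresholdReal {S : Set ℝ} (G : SimpleGraph S) : Prop :=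
  ∀ u v : S, G.Adj u v → |(u : ℝ) - (v : ℝ)| < 1

namespace Stmt18Aux

open SimpleGraph

/-- Along a walk, endpoints differ by less than the length (unless length 0). -/
lemma walk_abs {S : Set ℝ} {G : SimpleGraph S} (hut : HasUnitThresholdReal G)
    {u v : S} (p : G.Walk u v) :
    |(u : ℝ) - (v : ℝ)| < (p.length : ℝ) ∨ p.length = 0 := by
  induction p with
  | nil => exact Or.inr rfl
  | @cons a b c h q ih =>
    left
    have h1 : |(a : ℝ) - (b : ℝ)| < 1 := hut a b h
    have h2 : |(b : ℝ) - (c : ℝ)| ≤ (q.length : ℝ) := by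
      rcases ih with h' | h'
      · exact h'.le
      · have hbc : b = c := SimpleGraph.Walk.eq_of_length_eq_zero h'
        subst hbc
        simp
    have h3 := abs_sub_le (a : ℝ) (b : ℝ) (c : ℝ)
    have h4 : (((q.cons h).length : ℕ) : ℝ) = (q.length : ℝ) + 1 := by
      rw [SimpleGraph.Walk.length_cons]; push_cast; ring
    rw [h4]; linarith

/-- Existence of short walks via g.e.c. -/
lemma walk_exists {S : Set ℝ} (hSdense : Dense S) {G : SimpleGraph S}
    (hgec : IsGECReal G) :
    ∀ n : ℕ, 2 ≤ n → ∀ u v : S, |(u : ℝ) - (v : ℝ)| < (n : ℝ) →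
      ∃ p : G.Walk u v, p.length ≤ n := by
  classical
  intro n hn
  induction n, hn using Nat.le_induction with
  | base =>
    intro u v huv
    by_cases hEq : u = v
    · subst hEq; exact ⟨SimpleGraph.Walk.nil, by simp⟩
    · set mid : ℝ := ((u : ℝ) + (v : ℝ)) / 2 with hmid
      have huv2 : |(u : ℝ) - (v : ℝ)| < 2 := by push_cast at huv; linarith
      have hr : (0 : ℝ) < (2 - |(u : ℝ) - (v : ℝ)|) / 2 := by linarith
      obtain ⟨s, hsb, hsS⟩ := Metric.dense_iff.mp hSdense mid _ hr
      have hms : |mid - s| < (2 - |(u : ℝ) - (v : ℝ)|) / 2 := by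
        have h := Metric.mem_ball.mp hsb
        rw [Real.dist_eq] at h
        rwa [abs_sub_comm]
      have habs : |(v : ℝ) - (u : ℝ)| = |(u : ℝ) - (v : ℝ)| := abs_sub_comm _ _
      have hus : |(u : ℝ) - s| < 1 := by
        have e : (u : ℝ) - s = ((u : ℝ) - (v : ℝ)) / 2 + (mid - s) := by
          rw [hmid]; ring
        calc |(u : ℝ) - s| ≤ |((u : ℝ) - (v : ℝ)) / 2| + |mid - s| := by
              rw [e]; exact abs_add_le _ _
          _ < 1 := by rw [abs_div, abs_two]; linarith
      have hvs : |(v : ℝ) - s| < 1 := by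
        have e : (v : ℝ) - s = ((v : ℝ) - (u : ℝ)) / 2 + (mid - s) := by
          rw [hmid]; ring
        calc |(v : ℝ) - s| ≤ |((v : ℝ) - (u : ℝ)) / 2| + |mid - s| := by
              rw [e]; exact abs_add_le _ _
          _ < 1 := by rw [abs_div, abs_two, habs]; linarith
      obtain ⟨w, -, -, hadj, -, -⟩ :=
        hgec ⟨s, hsS⟩ {u, v} ∅ (Finset.disjoint_empty_right _)
          (by
            intro a ha
            rcases Finset.mem_insert.mp ha with rfl | ha'
            · exact hus
            · rw [Finset.mem_singleton] at ha'; subst ha'; exact hvs)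
          (by simp) 1 one_pos
      have h1 : G.Adj w u := hadj u (by simp)
      have h2 : G.Adj w v := hadj v (by simp)
      exact ⟨SimpleGraph.Walk.cons h1.symm (SimpleGraph.Walk.cons h2 SimpleGraph.Walk.nil),
        by simp⟩
  | succ n hn ih =>
    intro u v huv
    by_cases hlt : |(u : ℝ) - (v : ℝ)| < (n : ℝ)
    · obtain ⟨p, hp⟩ := ih u v hlt
      exact ⟨p, hp.trans (Nat.le_succ n)⟩
    · push_neg at hlt
      have hn2 : (2 : ℝ) ≤ (n : ℝ) := by exact_mod_cast hn
      set d : ℝ := |(u : ℝ) - (v : ℝ)| with hd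
      have hdn1 : d < (n : ℝ) + 1 := by push_cast at huv; linarith
      set η : ℝ := ((n : ℝ) + 1 - d) / 4 with hη
      have hη0 : 0 < η := by rw [hη]; linarith
      have hd2 : (2 : ℝ) ≤ d := le_trans hn2 hlt
      have hη1 : η ≤ 1 / 4 := by rw [hη]; linarith
      set σ : ℝ := if (u : ℝ) < (v : ℝ) then 1 else -1 with hσ
      have hσabs : |σ| = 1 := by rw [hσ]; split_ifs <;> simp
      have hσmul : σ * |(v : ℝ) - (u : ℝ)| = (v : ℝ) - (u : ℝ) := by
        rw [hσ]
        rcases lt_trichotomy ((u : ℝ)) ((v : ℝ)) with h | h | h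
        · rw [if_pos h, abs_of_pos (by linarith), one_mul]
        · exfalso; rw [hd, h, sub_self, abs_zero] at hd2; linarith
        · rw [if_neg (not_lt.mpr h.le), abs_of_neg (by linarith)]; ring
      have hdsymm : |(v : ℝ) - (u : ℝ)| = d := by rw [hd]; exact abs_sub_comm _ _
      set t : ℝ := (u : ℝ) + (1 - η) * σ with ht
      have hut1 : |(u : ℝ) - t| = 1 - η := by
        have e : (u : ℝ) - t = (-(1 - η)) * σ := by rw [ht]; ring
        rw [e, abs_mul, hσabs, mul_one, abs_neg, abs_of_pos (by linarith)]
      have htv : |t - (v : ℝ)| = d - (1 - η) := by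
        have e : t - (v : ℝ) = σ * ((1 - η) - d) := by
          have : (v : ℝ) - (u : ℝ) = σ * d := by rw [← hσmul, hdsymm]
          rw [ht]
          nlinarith [this]
        rw [e, abs_mul, hσabs, one_mul, abs_of_neg (by linarith)]
        ring
      obtain ⟨s, hsb, hsS⟩ := Metric.dense_iff.mp hSdense t (η / 4) (by linarith)
      have hts : |t - s| < η / 4 := by
        have h := Metric.mem_ball.mp hsb
        rw [Real.dist_eq] at h
        rwa [abs_sub_comm]
      have hus : |(u : ℝ) - s| < 1 := by
        calc |(u : ℝ) - s| ≤ |(u : ℝ) - t| + |t - s| := abs_sub_le _ _ _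
          _ < (1 - η) + η / 4 := by rw [hut1] at *; linarith
          _ < 1 := by linarith
      obtain ⟨w, -, -, hadj, -, hwclose⟩ :=
        hgec ⟨s, hsS⟩ {u} ∅ (Finset.disjoint_empty_right _)
          (by intro a ha; rw [Finset.mem_singleton] at ha; subst ha; exact hus)
          (by simp) (η / 4) (by linarith)
      have h1 : G.Adj w u := hadj u (by simp)
      have hwv : |(w : ℝ) - (v : ℝ)| < (n : ℝ) := by
        have hwt : |(w : ℝ) - t| < η / 2 := by
          calc |(w : ℝ) - t| ≤ |(w : ℝ) - s| + |s - t| := abs_sub_le _ _ _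
            _ < η / 4 + η / 4 := by
                rw [abs_sub_comm s t]; exact add_lt_add hwclose hts
            _ = η / 2 := by ring
        calc |(w : ℝ) - (v : ℝ)| ≤ |(w : ℝ) - t| + |t - (v : ℝ)| := abs_sub_le _ _ _
          _ < η / 2 + (d - (1 - η)) := by rw [htv]; linarith
          _ < (n : ℝ) := by rw [hη] at *; linarith
      obtain ⟨q, hq⟩ := ih w v hwv
      exact ⟨SimpleGraph.Walk.cons h1.symm q, by
        rw [SimpleGraph.Walk.length_cons]; omega⟩

lemma reachable_all {S : Set ℝ} (hSdense : Dense S) {G : SimpleGraph S}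
    (hgec : IsGECReal G) (u v : S) : G.Reachable u v := by
  obtain ⟨p, -⟩ := walk_exists hSdense hgec (⌊|(u : ℝ) - (v : ℝ)|⌋₊ + 2) (by omega) u v
    (by
      have h := Nat.lt_floor_add_one (|(u : ℝ) - (v : ℝ)|)
      push_cast
      linarith)
  exact ⟨p⟩

/-- The distance formula: if `m ≤ |u - v| < m + 1` with `m ≥ 2` then `dist = m + 1`. -/
lemma dist_formula {S : Set ℝ} (hSdense : Dense S) {G : SimpleGraph S}
    (hgec : IsGECReal G) (hut : HasUnitThresholdReal G) {u v : S} {m : ℕ}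
    (hm : 2 ≤ m) (h1 : (m : ℝ) ≤ |(u : ℝ) - (v : ℝ)|)
    (h2 : |(u : ℝ) - (v : ℝ)| < (m : ℝ) + 1) :
    G.dist u v = m + 1 := by
  obtain ⟨p, hp⟩ := walk_exists hSdense hgec (m + 1) (by omega) u v (by push_cast; linarith)
  have hle : G.dist u v ≤ m + 1 := (SimpleGraph.dist_le p).trans hp
  have hne : u ≠ v := by
    intro h
    rw [h, sub_self, abs_zero] at h1
    have : (2 : ℝ) ≤ (m : ℝ) := by exact_mod_cast hm
    linarith
  have hreach : G.Reachable u v := ⟨p⟩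
  obtain ⟨q, hq⟩ := hreach.exists_walk_length_eq_dist
  have hpos : 0 < G.dist u v := hreach.pos_dist_of_ne hne
  rcases walk_abs hut q with h' | h'
  · rw [hq] at h'
    have : (m : ℝ) < (G.dist u v : ℝ) := lt_of_le_of_lt h1 h'
    have : m < G.dist u v := by exact_mod_cast this
    omega
  · rw [hq] at h'; omega

/-- Converse: from the distance value, read off the real distance. -/
lemma dist_formula_conv {S : Set ℝ} (hSdense : Dense S) {G : SimpleGraph S}
    (hgec : IsGECReal G) (hut : HasUnitThresholdReal G) {u v : S} {m : ℕ}
    (hm : 2 ≤ m) (hd : G.dist u v = m + 1) :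
    (m : ℝ) ≤ |(u : ℝ) - (v : ℝ)| ∧ |(u : ℝ) - (v : ℝ)| < (m : ℝ) + 1 := by
  constructor
  · by_contra h
    push_neg at h
    obtain ⟨p, hp⟩ := walk_exists hSdense hgec m hm u v h
    have := (SimpleGraph.dist_le p).trans hp
    omega
  · have hreach : G.Reachable u v := reachable_all hSdense hgec u v
    obtain ⟨q, hq⟩ := hreach.exists_walk_length_eq_dist
    rcases walk_abs hut q with h' | h'
    · rw [hq, hd] at h'
      push_cast at h'
      linarith
    · rw [hq, hd] at h'; omega

end Stmt18Aux

open Stmt18Aux in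
/-- Any graph isomorphism `f` between g.e.c. unit-threshold graphs on dense countable subsets
of `ℝ` satisfies `{f(x−k), f(x+k)} = {f(x)−k, f(x)+k}` for every `x ∈ S` and integer `k ≥ 2`
with `x − k, x + k ∈ S`. -/
theorem stmt_18 (S S' : Set ℝ) (hSdense : Dense S) (hScount : S.Countable)
    (hS'dense : Dense S') (hS'count : S'.Countable)
    (G : SimpleGraph S) (hgec : IsGECReal G) (hut : HasUnitThresholdReal G)
    (G' : SimpleGraph S') (hgec' : IsGECReal G') (hut' : HasUnitThresholdReal G')
    (f : S ≃ S') (hf : ∀ a b : S, G.Adj a b ↔ G'.Adj (f a) (f b)) :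
    ∀ (x : ℝ) (hx : x ∈ S) (k : ℕ), 2 ≤ k →
      ∀ (hxm : x - (k : ℝ) ∈ S) (hxp : x + (k : ℝ) ∈ S),
        ({(f ⟨x - (k : ℝ), hxm⟩ : ℝ), (f ⟨x + (k : ℝ), hxp⟩ : ℝ)} : Set ℝ) =
          {(f ⟨x, hx⟩ : ℝ) - (k : ℝ), (f ⟨x, hx⟩ : ℝ) + (k : ℝ)} := by
  intro x hx k hk hxm hxp
  -- the graph homomorphisms in both directions
  let φ : G →g G' := ⟨f, fun h => (hf _ _).mp h⟩
  let ψ : G' →g G :=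
    ⟨f.symm, fun {a b} h => by
      have := (hf (f.symm a) (f.symm b)).mpr
      simp only [Equiv.apply_symm_apply] at this
      exact this h⟩
  have dist_iso : ∀ u v : S, G'.dist (f u) (f v) = G.dist u v := by
    intro u v
    apply le_antisymm
    · obtain ⟨p, hp⟩ := (reachable_all hSdense hgec u v).exists_walk_length_eq_dist
      have := SimpleGraph.dist_le (p.map φ)
      rwa [SimpleGraph.Walk.length_map, hp] at this
    · obtain ⟨q, hq⟩ :=
        (reachable_all hS'dense hgec' (f u) (f v)).exists_walk_length_eq_dist
      have h := SimpleGraph.dist_le (q.map ψ)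
      rw [SimpleGraph.Walk.length_map, hq] at h
      have e1 : ψ (f u) = u := f.symm_apply_apply u
      have e2 : ψ (f v) = v := f.symm_apply_apply v
      rw [e1, e2] at h
      exact h
  set u1 : S := ⟨x - (k : ℝ), hxm⟩
  set u0 : S := ⟨x, hx⟩
  set u2 : S := ⟨x + (k : ℝ), hxp⟩
  have hk2 : (2 : ℝ) ≤ (k : ℝ) := by exact_mod_cast hk
  -- distances in G
  have e10 : |(u1 : ℝ) - (u0 : ℝ)| = (k : ℝ) := by
    show |(x - (k : ℝ)) - x| = (k : ℝ)
    rw [show (x - (k : ℝ)) - x = -(k : ℝ) by ring, abs_neg, abs_of_nonneg (by linarith)]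
  have e20 : |(u2 : ℝ) - (u0 : ℝ)| = (k : ℝ) := by
    show |(x + (k : ℝ)) - x| = (k : ℝ)
    rw [show (x + (k : ℝ)) - x = (k : ℝ) by ring, abs_of_nonneg (by linarith)]
  have e12 : |(u1 : ℝ) - (u2 : ℝ)| = 2 * (k : ℝ) := by
    show |(x - (k : ℝ)) - (x + (k : ℝ))| = 2 * (k : ℝ)
    rw [show (x - (k : ℝ)) - (x + (k : ℝ)) = -(2 * (k : ℝ)) by ring, abs_neg,
      abs_of_nonneg (by linarith)]
  have hd10 : G.dist u1 u0 = k + 1 :=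
    dist_formula hSdense hgec hut hk (by rw [e10]) (by rw [e10]; linarith)
  have hd20 : G.dist u2 u0 = k + 1 :=
    dist_formula hSdense hgec hut hk (by rw [e20]) (by rw [e20]; linarith)
  have hd12 : G.dist u1 u2 = 2 * k + 1 :=
    dist_formula hSdense hgec hut (m := 2 * k) (by omega)
      (by rw [e12]; push_cast; linarith) (by rw [e12]; push_cast; linarith)
  set ya : ℝ := (f u1 : ℝ) with hya
  set yb : ℝ := (f u2 : ℝ) with hyb
  set y : ℝ := (f u0 : ℝ) with hy
  -- distances in G'
  have hd10' : G'.dist (f u1) (f u0) = k + 1 := by rw [dist_iso]; exact hd10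
  have hd20' : G'.dist (f u2) (f u0) = k + 1 := by rw [dist_iso]; exact hd20
  have hd12' : G'.dist (f u1) (f u2) = 2 * k + 1 := by rw [dist_iso]; exact hd12
  obtain ⟨hA1, hA2⟩ := dist_formula_conv hS'dense hgec' hut' hk hd10'
  obtain ⟨hB1, hB2⟩ := dist_formula_conv hS'dense hgec' hut' hk hd20'
  obtain ⟨hAB1, hAB2⟩ := dist_formula_conv hS'dense hgec' hut' (m := 2 * k) (by omega) hd12'
  push_cast at hAB1 hAB2
  rw [← hya, ← hy] at hA1 hA2
  rw [← hyb, ← hy] at hB1 hB2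
  rw [← hya, ← hyb] at hAB1 hAB2
  -- the key uniqueness statement, in purely real terms
  have KEY : ∀ w : ℝ, w ∈ S' → (k : ℝ) < |ya - w| → |ya - w| < (k : ℝ) + 1 →
      (k : ℝ) < |yb - w| → |yb - w| < (k : ℝ) + 1 → w = y := by
    intro w hwS' ha1 ha2 hb1 hb2
    set w' : S' := ⟨w, hwS'⟩
    have hda : G'.dist (f u1) w' = k + 1 :=
      dist_formula hS'dense hgec' hut' hk ha1.le ha2
    have hdb : G'.dist (f u2) w' = k + 1 :=
      dist_formula hS'dense hgec' hut' hk hb1.le hb2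
    set u : S := f.symm w' with hu
    have hfu : f u = w' := f.apply_symm_apply w'
    have hda' : G.dist u1 u = k + 1 := by
      rw [← dist_iso u1 u, hfu]; exact hda
    have hdb' : G.dist u2 u = k + 1 := by
      rw [← dist_iso u2 u, hfu]; exact hdb
    obtain ⟨ha1', ha2'⟩ := dist_formula_conv hSdense hgec hut hk hda'
    obtain ⟨hb1', hb2'⟩ := dist_formula_conv hSdense hgec hut hk hdb'
    have hux : (u : ℝ) = x := by
      have e1 : (u1 : ℝ) = x - (k : ℝ) := rfl
      have e2 : (u2 : ℝ) = x + (k : ℝ) := rfl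
      rw [e1] at ha1' ha2'
      rw [e2] at hb1' hb2'
      rcases abs_cases ((x - (k : ℝ)) - (u : ℝ)) with ⟨ea, _⟩ | ⟨ea, _⟩ <;>
        rcases abs_cases ((x + (k : ℝ)) - (u : ℝ)) with ⟨eb, _⟩ | ⟨eb, _⟩ <;>
        rw [ea] at ha1' ha2' <;> rw [eb] at hb1' hb2' <;> linarith
    have huu0 : u = u0 := Subtype.ext hux
    have : w' = f u0 := by rw [← hfu, huu0]
    have : (w' : ℝ) = (f u0 : ℝ) := by rw [this]
    exact this
  -- purely real pinning lemma applied in each orientation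
  have pin : ∀ za zb : ℝ, (k : ℝ) ≤ za - y → za - y < (k : ℝ) + 1 →
      (k : ℝ) ≤ y - zb → y - zb < (k : ℝ) + 1 → za - zb < 2 * (k : ℝ) + 1 →
      (∀ w : ℝ, w ∈ S' → (k : ℝ) < |za - w| → |za - w| < (k : ℝ) + 1 →
        (k : ℝ) < |zb - w| → |zb - w| < (k : ℝ) + 1 → w = y) →
      za = y + (k : ℝ) ∧ zb = y - (k : ℝ) := by
    intro za zb hA1' hA2' hB1' hB2' hAB' key
    have hza : za = y + (k : ℝ) := by
      by_contra hne
      have hgt : (k : ℝ) < za - y := lt_of_le_of_ne hA1' (by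
        intro h; exact hne (by linarith))
      obtain ⟨w, hwS', hw1, hw2⟩ := hS'dense.exists_between (show y < za - (k : ℝ) by linarith)
      have h1 : (k : ℝ) < |za - w| := by
        rw [abs_of_pos (by linarith)]; linarith
      have h2 : |za - w| < (k : ℝ) + 1 := by
        rw [abs_of_pos (by linarith)]; linarith
      have h3 : (k : ℝ) < |zb - w| := by
        rw [abs_of_neg (by linarith)]; linarith
      have h4 : |zb - w| < (k : ℝ) + 1 := by
        rw [abs_of_neg (by linarith)]; linarith
      have := key w hwS' h1 h2 h3 h4
      linarith [hw1, this.ge, this.le]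
    have hzb : zb = y - (k : ℝ) := by
      by_contra hne
      have hgt : (k : ℝ) < y - zb := lt_of_le_of_ne hB1' (by
        intro h; exact hne (by linarith))
      obtain ⟨w, hwS', hw1, hw2⟩ := hS'dense.exists_between (show zb + (k : ℝ) < y by linarith)
      have h1 : (k : ℝ) < |za - w| := by
        rw [abs_of_pos (by linarith)]; linarith
      have h2 : |za - w| < (k : ℝ) + 1 := by
        rw [abs_of_pos (by linarith)]; linarith
      have h3 : (k : ℝ) < |zb - w| := by
        rw [abs_of_neg (by linarith)]; linarith
      have h4 : |zb - w| < (k : ℝ) + 1 := by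
        rw [abs_of_neg (by linarith)]; linarith
      have := key w hwS' h1 h2 h3 h4
      linarith [hw2, this.ge, this.le]
    exact ⟨hza, hzb⟩
  -- unpack absolute values and case on orientation
  have hA2' : ya - y < (k : ℝ) + 1 ∧ -((k : ℝ) + 1) < ya - y := by
    have := abs_lt.mp hA2; exact ⟨this.2, this.1⟩
  have hB2' : yb - y < (k : ℝ) + 1 ∧ -((k : ℝ) + 1) < yb - y := by
    have := abs_lt.mp hB2; exact ⟨this.2, this.1⟩
  have hAB2' : ya - yb < 2 * (k : ℝ) + 1 ∧ -(2 * (k : ℝ) + 1) < ya - yb := by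
    have := abs_lt.mp hAB2; exact ⟨this.2, this.1⟩
  rcases le_abs'.mp hA1 with hA | hA <;> rcases le_abs'.mp hB1 with hB | hB <;>
    rcases le_abs'.mp hAB1 with hAB | hAB
  · -- ya left, yb left, 2k ≤ yb - ya : contradiction
    exact absurd hAB (by linarith [hA2'.2, hk2])
  · -- ya left, yb left, 2k ≤ ya - yb : contradiction
    exact absurd hAB (by linarith [hB2'.2, hk2])
  · -- ya left, yb right, 2k ≤ yb - ya : mirror case
    obtain ⟨hzb, hza⟩ := pin yb ya (by linarith) hB2'.1 (by linarith) (by linarith [hA2'.2])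
      (by linarith [hAB2'.2])
      (fun w hw h1 h2 h3 h4 => KEY w hw h3 h4 h1 h2)
    rw [hza, hzb]
  · -- ya left, yb right, 2k ≤ ya - yb : contradiction
    exact absurd hAB (by linarith [hk2])
  · -- ya right, yb left, 2k ≤ yb - ya : contradiction
    exact absurd hAB (by linarith [hk2])
  · -- ya right, yb left, 2k ≤ ya - yb : main case
    obtain ⟨hza, hzb⟩ := pin ya yb (by linarith) hA2'.1 (by linarith) (by linarith [hB2'.2])
      (by linarith [hAB2'.1])
      (fun w hw h1 h2 h3 h4 => KEY w hw h1 h2 h3 h4)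
    rw [hza, hzb]
    exact Set.pair_comm _ _
  · -- ya right, yb right : contradiction
    exact absurd hAB (by linarith [hB2'.2, hk2])
  · exact absurd hAB (by linarith [hA2'.2, hk2])
end
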